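/- Corollary of the three-tone lemma: for tones (v,f), (v*,f*), (v',f') with |v'| ≥ |v*| and any T > 0, (1/T)∫_0^T |v' e^{2πif't} − v e^{2πift}|² dt ≤ C·( (1/T)∫_0^T |v* e^{2πif*t} − v e^{2πift}|² dt + |v'|² ) for a universal constant C. -/

import Mathlib

open MeasureTheory Real

/-! Pointwise, both `v' e^{2πif't}` and `v* e^{2πif*t}` have modulus at most `|v'|`, so going
through `v* e^{2πif*t}` the triangle inequality gives
`|v' e' - v e| ≤ |v* e* - v e| + 2|v'|`, hence `|v' e' - v e|² ≤ 2|v* e* - v e|² + 8|v'|²`.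
Averaging over `[0, T]` yields the claim with `C = 8`. -/

noncomputable def tone (v : ℂ) (f t : ℝ) : ℂ :=
  v * Complex.exp (2 * π * f * t * Complex.I)

lemma norm_tone (v : ℂ) (f t : ℝ) : ‖tone v f t‖ = ‖v‖ := by
  simp [tone, Complex.norm_exp]

lemma continuous_tone (v : ℂ) (f : ℝ) : Continuous (tone v f) := by
  unfold tone
  fun_prop

section NormedGroup

variable {E : Type*} [SeminormedAddCommGroup E]

lemma norm_sub_le_norm_sub_add_two_mul {a b c : E} {r : ℝ} (ha : ‖a‖ ≤ r) (hb : ‖b‖ ≤ r) :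
    ‖a - c‖ ≤ ‖b - c‖ + 2 * r :=
  calc ‖a - c‖ ≤ ‖a - b‖ + ‖b - c‖ := norm_sub_le_norm_sub_add_norm_sub a b c
    _ ≤ ‖a‖ + ‖b‖ + ‖b - c‖ := by gcongr; exact norm_sub_le a b
    _ ≤ ‖b - c‖ + 2 * r := by linarith

lemma norm_sub_sq_le_two_mul_add_eight_mul {a b c : E} {r : ℝ} (ha : ‖a‖ ≤ r) (hb : ‖b‖ ≤ r) :
    ‖a - c‖ ^ 2 ≤ 2 * ‖b - c‖ ^ 2 + 8 * r ^ 2 :=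
  calc ‖a - c‖ ^ 2 ≤ (‖b - c‖ + 2 * r) ^ 2 := by
        gcongr; exact norm_sub_le_norm_sub_add_two_mul ha hb
    _ ≤ 2 * (‖b - c‖ ^ 2 + (2 * r) ^ 2) := add_sq_le
    _ = 2 * ‖b - c‖ ^ 2 + 8 * r ^ 2 := by ring

lemma interval_average_norm_sub_sq_le {u w z : ℝ → E} (hu : Continuous u) (hw : Continuous w)
    (hz : Continuous z) {r T : ℝ} (hT : 0 < T) (hur : ∀ t, ‖u t‖ ≤ r) (hwr : ∀ t, ‖w t‖ ≤ r) :
    (1 / T) * (∫ t in (0:ℝ)..T, ‖u t - z t‖ ^ 2)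
      ≤ 8 * ((1 / T) * (∫ t in (0:ℝ)..T, ‖w t - z t‖ ^ 2) + r ^ 2) := by
  have hint_u : IntervalIntegrable (fun t => ‖u t - z t‖ ^ 2) volume 0 T := by
    apply Continuous.intervalIntegrable; fun_prop
  have hint_w : IntervalIntegrable (fun t => ‖w t - z t‖ ^ 2) volume 0 T := by
    apply Continuous.intervalIntegrable; fun_prop
  have hnonneg : 0 ≤ (1 / T) * ∫ t in (0:ℝ)..T, ‖w t - z t‖ ^ 2 := by
    have := intervalIntegral.integral_nonneg (μ := volume) hT.le fun t _ => sq_nonneg ‖w t - z t‖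
    positivity
  calc (1 / T) * (∫ t in (0:ℝ)..T, ‖u t - z t‖ ^ 2)
      ≤ (1 / T) * ∫ t in (0:ℝ)..T, (2 * ‖w t - z t‖ ^ 2 + 8 * r ^ 2) := by
        gcongr
        exact intervalIntegral.integral_mono_on hT.le hint_u
          ((hint_w.const_mul 2).add intervalIntegrable_const)
          fun t _ => norm_sub_sq_le_two_mul_add_eight_mul (hur t) (hwr t)
    _ = 2 * ((1 / T) * ∫ t in (0:ℝ)..T, ‖w t - z t‖ ^ 2) + 8 * r ^ 2 := by
        rw [intervalIntegral.integral_add (hint_w.const_mul 2) intervalIntegrable_const,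
          intervalIntegral.integral_const_mul, intervalIntegral.integral_const, smul_eq_mul]
        field_simp
        ring
    _ ≤ 8 * ((1 / T) * (∫ t in (0:ℝ)..T, ‖w t - z t‖ ^ 2) + r ^ 2) := by linarith

end NormedGroup

/-- corollary of the three-tone lemma.  If `|v'| ≥ |v*|` then
`(1/T)∫_0^T |v' e^{2πif't} - v e^{2πift}|² dt
   ≤ C·((1/T)∫_0^T |v* e^{2πif*t} - v e^{2πift}|² dt + |v'|²)`. -/
theorem three_tone_integral_comparison :
    ∃ C : ℝ, 0 < C ∧
      ∀ (v vs v' : ℂ) (f fs f' T : ℝ), 0 < T → ‖vs‖ ≤ ‖v'‖ →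
        (1 / T) * (∫ t in (0:ℝ)..T,
            ‖v' * Complex.exp (2 * π * f' * t * Complex.I)
              - v * Complex.exp (2 * π * f * t * Complex.I)‖ ^ 2)
          ≤ C * ((1 / T) * (∫ t in (0:ℝ)..T,
              ‖vs * Complex.exp (2 * π * fs * t * Complex.I)
                - v * Complex.exp (2 * π * f * t * Complex.I)‖ ^ 2) + ‖v'‖ ^ 2) :=
  ⟨8, by norm_num, fun v vs v' f fs f' T hT hvs =>
    interval_average_norm_sub_sq_le (continuous_tone v' f') (continuous_tone vs fs)
      (continuous_tone v f) hT (fun t => (norm_tone v' f' t).le)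
      (fun t => (norm_tone vs fs t).trans_le hvs)⟩
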